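/- Let D ⊂ ℝ × (0,∞) be a nonempty open set and h : D → ℝ a function such that for each ζ > 0 the function h(·,ζ) is injective on the cross-section D_ζ := {ξ ∈ ℝ : (ξ,ζ) ∈ D}; let Φ_h(D) := {(h(ξ,ζ),ζ) : (ξ,ζ) ∈ D} and let h^{-1}(·,ζ) denote the inverse of h(·,ζ). Then for any ψ ∈ C([0,t];ℝ) with (ψ_t, Z_t(ψ)) ∈ Φ_h(D), the path φ := T_{ψ_t − h^{-1}(ψ_t, Z_t(ψ))}(ψ) satisfies (φ_t, Z_t(φ)) ∈ D and T_{φ_t − h(φ_t, Z_t(φ))}(φ) = ψ. -/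

import Mathlib

open MeasureTheory ProbabilityTheory Set

/-- `A_s(φ) = ∫_0^s e^{2 φ_u} du`. -/
noncomputable def pA (φ : ℝ → ℝ) (s : ℝ) : ℝ := ∫ u in (0:ℝ)..s, Real.exp (2 * φ u)

/-- `Z_s(φ) = e^{-φ_s} A_s(φ)`. -/
noncomputable def pZ (φ : ℝ → ℝ) (s : ℝ) : ℝ := Real.exp (-(φ s)) * pA φ s

/-- The anticipative transformation `T_z` on paths over `[0,t]`:
`T_z(φ)(s) = φ_s - log(1 + (A_s(φ)/A_t(φ)) (e^z - 1))`. -/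
noncomputable def pT (t z : ℝ) (φ : ℝ → ℝ) (s : ℝ) : ℝ :=
  φ s - Real.log (1 + (pA φ s / pA φ t) * (Real.exp z - 1))

/-!
Write `d_s = 1 + (A_s(ψ)/A_t(ψ))(e^z - 1)`, so that `T_z(ψ) = ψ - log d`. Since
`d' = e^{2ψ}(e^z - 1)/A_t(ψ)`, the function `A(ψ)/d` has derivative `e^{2ψ}/d² = e^{2 T_z(ψ)}`,
whence `A_s(T_z ψ) = A_s(ψ)/d_s`. At `s = t` this gives `T_z(ψ)_t = ψ_t - z` and
`A_t(T_z ψ) = e^{-z} A_t(ψ)`, so `Z_t` is invariant under `T_z`, and the factor `d` of `T_{-z}`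
at `T_z(ψ)` is the reciprocal of the one of `T_z` at `ψ`: `T_{-z} ∘ T_z = id` on `[0,t]`.
For `z = ψ_t - h⁻¹(ψ_t, Z_t(ψ))` the endpoint pair of `T_z(ψ)` is the point of `D` above
`(ψ_t, Z_t(ψ))`, and `φ_t - h(φ_t, Z_t(φ)) = -z`.
-/

open Real

noncomputable def pTFactor (t z : ℝ) (φ : ℝ → ℝ) (s : ℝ) : ℝ :=
  1 + pA φ s / pA φ t * (exp z - 1)

lemma pT_eq_sub_log (t z : ℝ) (φ : ℝ → ℝ) (s : ℝ) :
    pT t z φ s = φ s - log (pTFactor t z φ s) := rfl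

lemma one_add_mul_sub_one_pos {r e : ℝ} (hr₀ : 0 ≤ r) (hr₁ : r ≤ 1) (he : 0 < e) :
    0 < 1 + r * (e - 1) := by
  rcases hr₁.lt_or_eq with hr | rfl
  · nlinarith
  · linarith

section PathFunctionals

variable {ψ : ℝ → ℝ} {t z s : ℝ}

lemma pA_zero (φ : ℝ → ℝ) : pA φ 0 = 0 := intervalIntegral.integral_same

lemma pA_nonneg (φ : ℝ → ℝ) (hs : 0 ≤ s) : 0 ≤ pA φ s :=
  intervalIntegral.integral_nonneg hs fun _ _ => (exp_pos _).le

lemma intervalIntegrable_exp_two_mul (hψ : ContinuousOn ψ (Icc 0 t)) (hs : s ∈ Icc 0 t) :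
    IntervalIntegrable (fun u => exp (2 * ψ u)) volume 0 s :=
  ContinuousOn.intervalIntegrable_of_Icc hs.1 <|
    (continuous_exp.comp_continuousOn (continuousOn_const.mul hψ)).mono
      (Icc_subset_Icc le_rfl hs.2)

lemma pA_pos (hψ : ContinuousOn ψ (Icc 0 t)) (ht : 0 < t) : 0 < pA ψ t :=
  intervalIntegral.intervalIntegral_pos_of_pos_on
    (intervalIntegrable_exp_two_mul hψ ⟨ht.le, le_rfl⟩) (fun _ _ => exp_pos _) ht

lemma pA_le_pA (hψ : ContinuousOn ψ (Icc 0 t)) (hs : s ∈ Icc 0 t) : pA ψ s ≤ pA ψ t :=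
  intervalIntegral.integral_mono_interval le_rfl hs.1 hs.2
    (Filter.Eventually.of_forall fun _ => (exp_pos _).le)
    (intervalIntegrable_exp_two_mul hψ ⟨hs.1.trans hs.2, le_rfl⟩)

lemma continuousOn_pA (hψ : ContinuousOn ψ (Icc 0 t)) (ht : 0 ≤ t) :
    ContinuousOn (pA ψ) (Icc 0 t) := by
  have hcont : ContinuousOn (fun u => exp (2 * ψ u)) (uIcc 0 t) := by
    rw [uIcc_of_le ht]
    fun_prop
  have h := intervalIntegral.continuousOn_primitive_interval
    (hcont.integrableOn_compact (μ := volume) isCompact_uIcc)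
  rwa [uIcc_of_le ht] at h

lemma hasDerivAt_pA (hψ : ContinuousOn ψ (Icc 0 t)) {u : ℝ} (hu : u ∈ Ioo 0 t) :
    HasDerivAt (pA ψ) (exp (2 * ψ u)) u := by
  have hcont : ContinuousOn (fun v => exp (2 * ψ v)) (Ioo 0 t) :=
    continuous_exp.comp_continuousOn (continuousOn_const.mul (hψ.mono Ioo_subset_Icc_self))
  exact intervalIntegral.integral_hasDerivAt_right
    (intervalIntegrable_exp_two_mul hψ (Ioo_subset_Icc_self hu))
    (hcont.stronglyMeasurableAtFilter isOpen_Ioo u hu)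
    (hcont.continuousAt (isOpen_Ioo.mem_nhds hu))

lemma pTFactor_pos (hψ : ContinuousOn ψ (Icc 0 t)) (ht : 0 < t) (hs : s ∈ Icc 0 t) :
    0 < pTFactor t z ψ s :=
  one_add_mul_sub_one_pos (div_nonneg (pA_nonneg ψ hs.1) (pA_pos hψ ht).le)
    ((div_le_one (pA_pos hψ ht)).2 (pA_le_pA hψ hs)) (exp_pos z)

lemma pTFactor_self (hψ : ContinuousOn ψ (Icc 0 t)) (ht : 0 < t) :
    pTFactor t z ψ t = exp z := by
  rw [pTFactor, div_self (pA_pos hψ ht).ne']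
  ring

lemma pT_self (hψ : ContinuousOn ψ (Icc 0 t)) (ht : 0 < t) : pT t z ψ t = ψ t - z := by
  rw [pT_eq_sub_log, pTFactor_self hψ ht, log_exp]

lemma hasDerivAt_pTFactor (hψ : ContinuousOn ψ (Icc 0 t)) {u : ℝ} (hu : u ∈ Ioo 0 t) :
    HasDerivAt (pTFactor t z ψ) (exp (2 * ψ u) / pA ψ t * (exp z - 1)) u :=
  (((hasDerivAt_pA hψ hu).div_const _).mul_const _).const_add 1

lemma hasDerivAt_pA_div_pTFactor (hψ : ContinuousOn ψ (Icc 0 t)) (ht : 0 < t) {u : ℝ}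
    (hu : u ∈ Ioo 0 t) :
    HasDerivAt (fun v => pA ψ v / pTFactor t z ψ v) (exp (2 * ψ u) / pTFactor t z ψ u ^ 2) u := by
  have hnum : exp (2 * ψ u) * pTFactor t z ψ u - pA ψ u * (exp (2 * ψ u) / pA ψ t * (exp z - 1)) =
      exp (2 * ψ u) := by
    rw [pTFactor]
    ring
  rw [← hnum]
  exact (hasDerivAt_pA hψ hu).div (hasDerivAt_pTFactor hψ hu)
    (pTFactor_pos hψ ht (Ioo_subset_Icc_self hu)).ne'

lemma pA_pT (hψ : ContinuousOn ψ (Icc 0 t)) (ht : 0 < t) (hs : s ∈ Icc 0 t) :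
    pA (pT t z ψ) s = pA ψ s / pTFactor t z ψ s := by
  set d := pTFactor t z ψ
  have hsub : Icc 0 s ⊆ Icc 0 t := Icc_subset_Icc le_rfl hs.2
  have hd : ∀ u ∈ Icc 0 s, 0 < d u := fun u hu => pTFactor_pos hψ ht (hsub hu)
  have hd_cont : ContinuousOn d (Icc 0 s) :=
    (continuousOn_const.add (((continuousOn_pA hψ ht.le).div_const _).mul_const _)).mono hsub
  have hexp : ∀ u ∈ Icc 0 s, exp (2 * pT t z ψ u) = exp (2 * ψ u) / d u ^ 2 := by
    intro u hu
    have hsq : exp (2 * log (d u)) = d u ^ 2 := by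
      rw [mul_comm, exp_mul, exp_log (hd u hu)]
      norm_cast
    rw [pT_eq_sub_log, mul_sub, exp_sub, ← hsq]
  have hderiv : ∀ u ∈ Ioo 0 s,
      HasDerivWithinAt (fun v => pA ψ v / d v) (exp (2 * ψ u) / d u ^ 2) (Ioi u) u :=
    fun u hu => (hasDerivAt_pA_div_pTFactor hψ ht ⟨hu.1, hu.2.trans_le hs.2⟩).hasDerivWithinAt
  have hint : IntervalIntegrable (fun u => exp (2 * ψ u) / d u ^ 2) volume 0 s :=
    ContinuousOn.intervalIntegrable_of_Icc hs.1 <|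
      ((continuous_exp.comp_continuousOn (continuousOn_const.mul (hψ.mono hsub))).div
        (hd_cont.pow 2) fun u hu => (pow_pos (hd u hu) 2).ne')
  calc pA (pT t z ψ) s = ∫ u in (0 : ℝ)..s, exp (2 * ψ u) / d u ^ 2 :=
        intervalIntegral.integral_congr fun u hu => hexp u (by rwa [uIcc_of_le hs.1] at hu)
    _ = pA ψ s / d s - pA ψ 0 / d 0 :=
        intervalIntegral.integral_eq_sub_of_hasDeriv_right_of_le hs.1
          (((continuousOn_pA hψ ht.le).mono hsub).div hd_cont fun u hu => (hd u hu).ne')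
          hderiv hint
    _ = pA ψ s / d s := by rw [pA_zero, zero_div, sub_zero]

lemma pA_pT_self (hψ : ContinuousOn ψ (Icc 0 t)) (ht : 0 < t) :
    pA (pT t z ψ) t = pA ψ t / exp z := by
  rw [pA_pT hψ ht ⟨ht.le, le_rfl⟩, pTFactor_self hψ ht]

lemma pZ_pT (hψ : ContinuousOn ψ (Icc 0 t)) (ht : 0 < t) : pZ (pT t z ψ) t = pZ ψ t := by
  rw [pZ, pZ, pA_pT_self hψ ht, pT_self hψ ht, exp_neg, exp_neg, exp_sub]
  field_simp

lemma pTFactor_neg_pT (hψ : ContinuousOn ψ (Icc 0 t)) (ht : 0 < t) (hs : s ∈ Icc 0 t) :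
    pTFactor t (-z) (pT t z ψ) s = (pTFactor t z ψ s)⁻¹ := by
  have hA := (pA_pos hψ ht).ne'
  have hd : pA ψ t + pA ψ s * (exp z - 1) ≠ 0 := by
    have hmul : pTFactor t z ψ s * pA ψ t = pA ψ t + pA ψ s * (exp z - 1) := by
      rw [pTFactor]
      field_simp
    rw [← hmul]
    exact mul_ne_zero (pTFactor_pos hψ ht hs).ne' hA
  rw [pTFactor, pTFactor, pA_pT hψ ht hs, pA_pT_self hψ ht, pTFactor, exp_neg]
  field_simp
  ring

lemma pT_neg_pT (hψ : ContinuousOn ψ (Icc 0 t)) (ht : 0 < t) :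
    EqOn (pT t (-z) (pT t z ψ)) ψ (Icc 0 t) := by
  intro s hs
  rw [pT_eq_sub_log, pTFactor_neg_pT hψ ht hs, log_inv, pT_eq_sub_log]
  ring

end PathFunctionals

theorem pT_inverse_pair_general (t : ℝ) (ht : 0 < t)
    (D : Set (ℝ × ℝ))
    (h : ℝ × ℝ → ℝ)
    (hinv : ℝ × ℝ → ℝ)
    (hhinv : ∀ p ∈ D, hinv (h p, p.2) = p.1)
    (ψ : ℝ → ℝ) (hψ : ContinuousOn ψ (Icc 0 t))
    (hmem : (ψ t, pZ ψ t) ∈ (fun p : ℝ × ℝ => (h p, p.2)) '' D) :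
    ((pT t (ψ t - hinv (ψ t, pZ ψ t)) ψ t,
        pZ (pT t (ψ t - hinv (ψ t, pZ ψ t)) ψ) t) ∈ D) ∧
      (∀ s ∈ Icc (0:ℝ) t,
        pT t
          (pT t (ψ t - hinv (ψ t, pZ ψ t)) ψ t -
            h (pT t (ψ t - hinv (ψ t, pZ ψ t)) ψ t,
               pZ (pT t (ψ t - hinv (ψ t, pZ ψ t)) ψ) t))
          (pT t (ψ t - hinv (ψ t, pZ ψ t)) ψ) s = ψ s) := by
  obtain ⟨p, hpD, hp⟩ := hmem
  obtain ⟨hhp, hp₂⟩ := Prod.mk.inj hp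
  have hinv_eq : hinv (ψ t, pZ ψ t) = p.1 := by rw [← hhp, ← hp₂, hhinv p hpD]
  have hφ_end : (pT t (ψ t - p.1) ψ t, pZ (pT t (ψ t - p.1) ψ) t) = p := by
    rw [pT_self hψ ht, pZ_pT hψ ht, ← hp₂, sub_sub_cancel]
  rw [hinv_eq, hφ_end]
  refine ⟨hpD, fun s hs => ?_⟩
  have hz : p.1 - h p = -(ψ t - p.1) := by rw [hhp]; ring
  rw [pT_self hψ ht, sub_sub_cancel, hz]
  exact pT_neg_pT hψ ht hs

/-- Let `D ⊆ ℝ × (0,∞)` be a nonempty open set and `h` a function which, for each `ζ > 0`,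
is injective in its first variable on the cross-section `D_ζ`; let `hinv` be its inverse in
the first variable and `Φ_h(D) = {(h(ξ,ζ),ζ) : (ξ,ζ) ∈ D}`.  For any `ψ ∈ C([0,t];ℝ)` with
`(ψ_t, Z_t(ψ)) ∈ Φ_h(D)`, the path `φ := T_{ψ_t - h⁻¹(ψ_t,Z_t(ψ))}(ψ)` satisfies
`(φ_t, Z_t(φ)) ∈ D` and `T_{φ_t - h(φ_t,Z_t(φ))}(φ) = ψ`. -/
theorem pT_inverse_pair (t : ℝ) (ht : 0 < t)
    (D : Set (ℝ × ℝ)) (hDsub : D ⊆ univ ×ˢ Ioi (0:ℝ)) (hDopen : IsOpen D)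
    (hDne : D.Nonempty)
    (h : ℝ × ℝ → ℝ)
    (hinj : ∀ ζ : ℝ, 0 < ζ → InjOn (fun ξ => h (ξ, ζ)) {ξ : ℝ | (ξ, ζ) ∈ D})
    (hinv : ℝ × ℝ → ℝ)
    (hhinv : ∀ p ∈ D, hinv (h p, p.2) = p.1)
    (ψ : ℝ → ℝ) (hψ : ContinuousOn ψ (Icc 0 t))
    (hmem : (ψ t, pZ ψ t) ∈ (fun p : ℝ × ℝ => (h p, p.2)) '' D) :
    ((pT t (ψ t - hinv (ψ t, pZ ψ t)) ψ t,
        pZ (pT t (ψ t - hinv (ψ t, pZ ψ t)) ψ) t) ∈ D) ∧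
      (∀ s ∈ Icc (0:ℝ) t,
        pT t
          (pT t (ψ t - hinv (ψ t, pZ ψ t)) ψ t -
            h (pT t (ψ t - hinv (ψ t, pZ ψ t)) ψ t,
               pZ (pT t (ψ t - hinv (ψ t, pZ ψ t)) ψ) t))
          (pT t (ψ t - hinv (ψ t, pZ ψ t)) ψ) s = ψ s) :=
  pT_inverse_pair_general t ht D h hinv hhinv ψ hψ hmem
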